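/- arXiv:2004.05092 — 7 statements merged into one kernel-verified Lean document; each statement's English description precedes it below -/
import Mathlib

section
/- Let V be an n×m integer matrix of rank n with n < m, such that the convex cone generated by the columns of V is all of ℝ^n (V is complete). Then the real kernel of V contains a strictly positive vector, i.e. there exists u ∈ ℝ^m with V u = 0 and u_i > 0 for every i = 1,…,m. -/
open Matrix

/-- If `V` is an `n × m` integer matrix of rank `n` with `n < m`
whose columns generate `ℝⁿ` as a convex cone (completeness), then the real kernel
of `V` contains a strictly positive vector. -/
theorem exists_strictly_positive_kernel_vector
    (n m : ℕ) (hnm : n < m) (V : Matrix (Fin n) (Fin m) ℤ)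
    (hrank : V.rank = n)
    (hcomplete : ∀ b : Fin n → ℝ, ∃ u : Fin m → ℝ,
      (∀ i, 0 ≤ u i) ∧ (V.map (Int.cast : ℤ → ℝ)) *ᵥ u = b) :
    ∃ u : Fin m → ℝ, (V.map (Int.cast : ℤ → ℝ)) *ᵥ u = 0 ∧ ∀ i, 0 < u i := by
  obtain ⟨u, hu, huv⟩ := hcomplete (-(V.map (Int.cast : ℤ → ℝ) *ᵥ fun _ => 1))
  refine ⟨u + fun _ => 1, ?_, fun i => by have := hu i; simp [Pi.add_apply]; linarith⟩
  rw [Matrix.mulVec_add, huv]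
  simp
end

section
/- Let V be an n×m integer matrix of rank n with n < m, all of whose columns are nonzero. Then the convex cone generated by the columns of V equals ℝ^n if and only if for every index i ∈ {1,…,m} there exists a vector u ∈ ℕ^m with V u = 0 and u_i > 0 (equivalently, the toric ideal I_V contains a binomial x^u − 1 with i in the support of u). -/
/-!
If the columns of `V` positively span `ℝⁿ`, then `V` is onto and `V p = 0` for some `p > 0`
(solve `V u = -V 1` with `u ≥ 0` and put `p = u + 1`); conversely such a `p` lets one push any
preimage of `b` into the positive orthant along `ker V`. Since `V` has full rank over `ℤ`, there
are an integer matrix `S` and an integer `d > 0` with `V S = d • 1`, so `Q = d • 1 - S V` is an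
integer matrix with `V Q = 0` acting as `d` on `ker V`. Hence `Q p = d p > 0` for a real positive
kernel vector `p`, this open condition is met by a rational and then by an integer vector `z`, and
`Q z` is a positive integer kernel vector. Summing kernel vectors `u⁽ⁱ⁾ ∈ ℕᵐ` with `u⁽ⁱ⁾ᵢ > 0`
gives one with full support, and vice versa.
-/

open Matrix

theorem Rat.exists_nat_mul_eq_intCast {κ : Type*} [Fintype κ] (q : κ → ℚ) :
    ∃ e : ℕ, 0 < e ∧ ∃ z : κ → ℤ, ∀ j, (z j : ℚ) = e * q j := by
  refine ⟨∏ j, (q j).den, Finset.prod_pos fun j _ => (q j).pos,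
    fun j => (q j).num * ((∏ k, (q k).den) / (q j).den : ℕ), fun j => ?_⟩
  obtain ⟨k, hk⟩ := Finset.dvd_prod_of_mem (fun j => (q j).den) (Finset.mem_univ j)
  dsimp only
  rw [hk, Nat.mul_div_cancel_left _ (q j).pos]
  push_cast
  rw [← Rat.den_mul_eq_num]
  ring

namespace Matrix

variable {ι κ : Type*} [Fintype κ]

def HasPosKernelVector {R : Type*} [NonUnitalNonAssocSemiring R] [Preorder R]
    (A : Matrix ι κ R) : Prop :=
  ∃ p : κ → R, A *ᵥ p = 0 ∧ ∀ j, 0 < p j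

theorem forall_exists_nonneg_mulVec_eq_iff {K : Type*} [Field K] [LinearOrder K]
    [IsStrictOrderedRing K] (A : Matrix ι κ K) :
    (∀ b, ∃ u, (∀ j, 0 ≤ u j) ∧ A *ᵥ u = b) ↔
      Function.Surjective A.mulVec ∧ A.HasPosKernelVector := by
  constructor
  · intro h
    refine ⟨fun b => (h b).imp fun _ => And.right, ?_⟩
    obtain ⟨u, hu, huA⟩ := h (-(A *ᵥ 1))
    refine ⟨u + 1, by rw [mulVec_add, huA, neg_add_cancel], fun j => ?_⟩
    simpa using add_pos_of_nonneg_of_pos (hu j) one_pos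
  · rintro ⟨hsurj, p, hp, hpos⟩ b
    obtain ⟨w, rfl⟩ := hsurj b
    set t := ∑ j, |w j| / p j
    refine ⟨w + t • p, fun j => ?_, by rw [mulVec_add, mulVec_smul, hp, smul_zero, add_zero]⟩
    have ht : |w j| / p j ≤ t :=
      Finset.single_le_sum (f := fun j => |w j| / p j)
        (fun j _ => div_nonneg (abs_nonneg _) (hpos j).le) (Finset.mem_univ j)
    have := (div_le_iff₀ (hpos j)).mp ht
    simp only [Pi.add_apply, Pi.smul_apply, smul_eq_mul]
    linarith [neg_abs_le (w j)]

theorem map_intCast_mul {K ο : Type*} [Ring K] (A : Matrix ι κ ℤ) (B : Matrix κ ο ℤ) :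
    (A * B).map (Int.cast : ℤ → K) = A.map (Int.cast : ℤ → K) * B.map (Int.cast : ℤ → K) :=
  Matrix.map_mul (f := Int.castRingHom K)

theorem map_intCast_mulVec {K : Type*} [Ring K] (A : Matrix ι κ ℤ) (v : κ → ℤ) :
    A.map (Int.cast : ℤ → K) *ᵥ (fun j => (v j : K)) = fun i => ((A *ᵥ v) i : K) :=
  funext fun i => (RingHom.map_mulVec (Int.castRingHom K) A v i).symm

theorem map_intCast_smul_one [DecidableEq ι] {K : Type*} [Ring K] (d : ℤ) :
    (d • (1 : Matrix ι ι ℤ)).map (Int.cast : ℤ → K) = (d : K) • 1 := by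
  ext i j
  rw [map_apply, smul_apply, smul_apply, one_apply, one_apply]
  split_ifs <;> simp

theorem hasPosKernelVector_iff_forall_exists_nat {V : Matrix ι κ ℤ} :
    V.HasPosKernelVector ↔ ∀ i, ∃ u : κ → ℕ, V *ᵥ (fun j => (u j : ℤ)) = 0 ∧ 0 < u i := by
  constructor
  · rintro ⟨p, hp, hpos⟩ i
    have hp_toNat : (fun j => ((p j).toNat : ℤ)) = p :=
      funext fun j => Int.toNat_of_nonneg (hpos j).le
    exact ⟨fun j => (p j).toNat, hp_toNat ▸ hp, by simpa using hpos i⟩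
  · intro h
    choose u hu hpos using h
    refine ⟨∑ i, fun j => (u i j : ℤ), by simp [mulVec_sum, hu], fun j => ?_⟩
    rw [Finset.sum_apply]
    exact (Int.natCast_pos.mpr (hpos j)).trans_le <|
      Finset.single_le_sum (f := fun i => (u i j : ℤ)) (fun i _ => by positivity)
        (Finset.mem_univ j)

theorem HasPosKernelVector.map_intCast {K : Type*} [Ring K] [PartialOrder K]
    [IsStrictOrderedRing K] {V : Matrix ι κ ℤ} (h : V.HasPosKernelVector) :
    (V.map (Int.cast : ℤ → K)).HasPosKernelVector := by
  obtain ⟨p, hp, hpos⟩ := h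
  exact ⟨fun j => (p j : K), by rw [map_intCast_mulVec, hp]; exact funext fun _ => Int.cast_zero,
    fun j => Int.cast_pos.mpr (hpos j)⟩

theorem exists_mulVec_pos_of_map_intCast [Finite ι] {Q : Matrix ι κ ℤ} {y : κ → ℝ}
    (hy : ∀ i, 0 < (Q.map (Int.cast : ℤ → ℝ) *ᵥ y) i) : ∃ z : κ → ℤ, ∀ i, 0 < (Q *ᵥ z) i := by
  set O := {y : κ → ℝ | ∀ i, 0 < (Q.map (Int.cast : ℤ → ℝ) *ᵥ y) i}
  have hO : IsOpen O := by
    simp only [O, Set.ofPred_forall]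
    exact isOpen_iInter_of_finite fun i => isOpen_lt continuous_const
      ((continuous_apply i).comp (continuous_const.matrix_mulVec continuous_id))
  obtain ⟨q, hq⟩ := (DenseRange.piMap fun _ => Rat.denseRange_cast).exists_mem_open hO ⟨y, hy⟩
  obtain ⟨e, he, z, hz⟩ := Rat.exists_nat_mul_eq_intCast q
  have hzq : (fun j => (z j : ℝ)) = (e : ℝ) • fun j => (q j : ℝ) :=
    funext fun j => by simp only [Pi.smul_apply, smul_eq_mul]; exact_mod_cast hz j
  refine ⟨z, fun i => ?_⟩
  have hzi : ((Q *ᵥ z) i : ℝ) = e * (Q.map (Int.cast : ℤ → ℝ) *ᵥ fun j => (q j : ℝ)) i := by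
    rw [← congrFun (map_intCast_mulVec Q z) i, hzq, mulVec_smul]
    rfl
  have : (0 : ℝ) < (Q *ᵥ z) i := hzi ▸ mul_pos (Nat.cast_pos.mpr he) (hq i)
  exact_mod_cast this

section FullRank

variable [Fintype ι] [DecidableEq ι] {V : Matrix ι κ ℤ}

theorem exists_det_mul_ne_zero_of_rank_eq_card (hrank : V.rank = Fintype.card ι) :
    ∃ U : Matrix κ ι ℤ, (V * U).det ≠ 0 := by
  let b : Module.Basis ι ℤ (LinearMap.range V.mulVecLin) :=
    (Module.finBasisOfFinrankEq ℤ _ hrank).reindex (Fintype.equivFin ι).symm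
  choose u hu using fun k => LinearMap.mem_range.mp (b k).2
  refine ⟨(of u)ᵀ, fun hdet => ?_⟩
  obtain ⟨c, hc, hc0⟩ := exists_mulVec_eq_zero_iff.mpr hdet
  have hcols : (V * (of u)ᵀ) *ᵥ c = ∑ k, c k • (b k : ι → ℤ) := by
    simp only [← mulVec_mulVec, mulVec_transpose, vecMul_eq_sum, mulVec_sum, mulVec_smul,
      ← hu, mulVecLin_apply]
    rfl
  apply hc
  have hli := b.linearIndependent.map' _ (Submodule.ker_subtype _)
  exact funext (Fintype.linearIndependent_iff.mp hli c (hcols ▸ hc0))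

theorem exists_mul_eq_smul_one_of_rank_eq_card (hrank : V.rank = Fintype.card ι) :
    ∃ (S : Matrix κ ι ℤ) (d : ℤ), 0 < d ∧ V * S = d • 1 := by
  obtain ⟨U, hU⟩ := exists_det_mul_ne_zero_of_rank_eq_card hrank
  -- `V U adj(V U) = det(V U) • 1`; one more factor of the determinant makes the scalar positive.
  refine ⟨(V * U).det • (U * adjugate (V * U)), (V * U).det ^ 2, by positivity, ?_⟩
  rw [Matrix.mul_smul, ← Matrix.mul_assoc, mul_adjugate, smul_smul, sq]

theorem mulVec_surjective_map_intCast_of_rank_eq_card {K : Type*} [Field K] [CharZero K]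
    (hrank : V.rank = Fintype.card ι) :
    Function.Surjective (V.map (Int.cast : ℤ → K)).mulVec := by
  obtain ⟨S, d, hd, hVS⟩ := exists_mul_eq_smul_one_of_rank_eq_card hrank
  have hVSK : V.map (Int.cast : ℤ → K) * S.map (Int.cast : ℤ → K) = (d : K) • 1 := by
    rw [← map_intCast_mul, hVS, map_intCast_smul_one]
  intro b
  refine ⟨S.map (Int.cast : ℤ → K) *ᵥ ((d : K)⁻¹ • b), ?_⟩
  rw [mulVec_mulVec, hVSK, smul_mulVec, one_mulVec, smul_smul,
    mul_inv_cancel₀ (by exact_mod_cast hd.ne'), one_smul]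

theorem HasPosKernelVector.of_map_intCast [DecidableEq κ] (hrank : V.rank = Fintype.card ι)
    (h : (V.map (Int.cast : ℤ → ℝ)).HasPosKernelVector) : V.HasPosKernelVector := by
  obtain ⟨p, hp, hpos⟩ := h
  obtain ⟨S, d, hd, hVS⟩ := exists_mul_eq_smul_one_of_rank_eq_card hrank
  set Q : Matrix κ κ ℤ := d • 1 - S * V
  have hVQ : V * Q = 0 := by
    rw [Matrix.mul_sub, Matrix.mul_smul, Matrix.mul_one, ← Matrix.mul_assoc, hVS,
      Matrix.smul_mul, Matrix.one_mul, sub_self]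
  have hQp : Q.map (Int.cast : ℤ → ℝ) *ᵥ p = (d : ℝ) • p := by
    rw [Matrix.map_sub _ Int.cast_sub, map_intCast_mul, map_intCast_smul_one, sub_mulVec,
      ← mulVec_mulVec, hp, mulVec_zero, sub_zero, smul_mulVec, one_mulVec]
  obtain ⟨z, hz⟩ := exists_mulVec_pos_of_map_intCast (Q := Q) (y := p) fun i => by
    rw [hQp]
    exact mul_pos (Int.cast_pos.mpr hd) (hpos i)
  exact ⟨Q *ᵥ z, by rw [mulVec_mulVec, hVQ, zero_mulVec], hz⟩

end FullRank

end Matrix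

theorem complete_iff_forall_exists_nonneg_kernel_vector_general
    (n m : ℕ) (V : Matrix (Fin n) (Fin m) ℤ)
    (hrank : V.rank = n) :
    (∀ b : Fin n → ℝ, ∃ u : Fin m → ℝ,
        (∀ i, 0 ≤ u i) ∧ (V.map (Int.cast : ℤ → ℝ)) *ᵥ u = b)
      ↔ (∀ i : Fin m, ∃ u : Fin m → ℕ,
        V *ᵥ (fun j => (u j : ℤ)) = 0 ∧ 0 < u i) := by
  have hrank' : V.rank = Fintype.card (Fin n) := by rw [hrank, Fintype.card_fin]
  rw [forall_exists_nonneg_mulVec_eq_iff, ← hasPosKernelVector_iff_forall_exists_nat]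
  exact ⟨fun h => h.2.of_map_intCast hrank',
    fun h => ⟨mulVec_surjective_map_intCast_of_rank_eq_card hrank', h.map_intCast⟩⟩

/-- For an `n × m` integer matrix `V` of rank `n`, `n < m`, with all
columns nonzero, the convex cone generated by the columns of `V` equals `ℝⁿ` if and
only if for every index `i` there is `u ∈ ℕᵐ` with `V u = 0` and `uᵢ > 0`. -/
theorem complete_iff_forall_exists_nonneg_kernel_vector
    (n m : ℕ) (hnm : n < m) (V : Matrix (Fin n) (Fin m) ℤ)
    (hrank : V.rank = n)
    (hcols : ∀ j : Fin m, ∃ i, V i j ≠ 0) :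
    (∀ b : Fin n → ℝ, ∃ u : Fin m → ℝ,
        (∀ i, 0 ≤ u i) ∧ (V.map (Int.cast : ℤ → ℝ)) *ᵥ u = b)
      ↔ (∀ i : Fin m, ∃ u : Fin m → ℕ,
        V *ᵥ (fun j => (u j : ℤ)) = 0 ∧ 0 < u i) :=
  complete_iff_forall_exists_nonneg_kernel_vector_general n m V hrank
end

section
/- Let V be an n×m integer matrix of rank n with n < m, such that the convex cone generated by the columns of V is all of ℝ^n. Then for every u ∈ ℕ^m the fiber F(u) = (L + u) ∩ ℕ^m is an infinite set, where L = ker(V) ∩ ℤ^m. -/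
open Matrix

/-- If `V` is a complete `n × m` integer matrix of rank `n`, `n < m`,
then for every `u ∈ ℕᵐ` the fiber `F(u) = (ker V ∩ ℤᵐ + u) ∩ ℕᵐ`, i.e. the set of
`v ∈ ℕᵐ` with `V v = V u`, is infinite. -/
theorem fiber_infinite
    (n m : ℕ) (hnm : n < m) (V : Matrix (Fin n) (Fin m) ℤ)
    (hrank : V.rank = n)
    (hcomplete : ∀ b : Fin n → ℝ, ∃ u : Fin m → ℝ,
      (∀ i, 0 ≤ u i) ∧ (V.map (Int.cast : ℤ → ℝ)) *ᵥ u = b)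
    (u : Fin m → ℕ) :
    {v : Fin m → ℕ |
      V *ᵥ (fun j => (v j : ℤ)) = V *ᵥ (fun j => (u j : ℤ))}.Infinite := by
  -- Step 1: a real vector x ≥ 1 in the kernel of V.
  obtain ⟨u₀, hu₀, hVu₀⟩ := hcomplete (-(V.map (Int.cast : ℤ → ℝ) *ᵥ (fun _ => 1)))
  set x : Fin m → ℝ := fun j => u₀ j + 1 with hx
  have hx1 : ∀ j, (1 : ℝ) ≤ x j := fun j => by
    simpa [hx] using add_le_add_right (hu₀ j) 1
  have hker : ∀ i, ∑ j, (V i j : ℝ) * x j = 0 := by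
    intro i
    have : (V.map (Int.cast : ℤ → ℝ) *ᵥ x) i = 0 := by
      have : V.map (Int.cast : ℤ → ℝ) *ᵥ x
          = V.map (Int.cast : ℤ → ℝ) *ᵥ u₀ + V.map (Int.cast : ℤ → ℝ) *ᵥ (fun _ => 1) := by
        rw [← Matrix.mulVec_add]; rfl
      rw [this, hVu₀]
      simp
    simpa [Matrix.mulVec, dotProduct, Matrix.map_apply] using this
  -- Step 2: the integer vectors f N are bounded, pigeonhole.
  set f : ℕ → Fin n → ℤ := fun N i => ∑ j, V i j * ⌊(2 * (N : ℝ)) * x j⌋ with hf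
  set B : Fin n → ℤ := fun i => ∑ j, |V i j| with hB
  have hbound : ∀ N, f N ∈ Set.Icc (-B) B := by
    intro N
    have key : ∀ i, |f N i| ≤ B i := by
      intro i
      have hreal : ((f N i : ℝ)) = ∑ j, (V i j : ℝ) * ((⌊(2 * (N : ℝ)) * x j⌋ : ℝ) - (2 * (N : ℝ)) * x j) := by
        have h0 : ∑ j, (V i j : ℝ) * ((2 * (N : ℝ)) * x j) = 0 := by
          have := hker i
          calc ∑ j, (V i j : ℝ) * ((2 * (N : ℝ)) * x j)
              = (2 * (N : ℝ)) * ∑ j, (V i j : ℝ) * x j := by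
                rw [Finset.mul_sum]; congr 1; ext j; ring
            _ = 0 := by rw [this]; ring
        have : ((f N i : ℝ)) = ∑ j, (V i j : ℝ) * (⌊(2 * (N : ℝ)) * x j⌋ : ℝ) := by
          simp [hf]
        rw [this, ← sub_zero (∑ j, (V i j : ℝ) * (⌊(2 * (N : ℝ)) * x j⌋ : ℝ)), ← h0,
          ← Finset.sum_sub_distrib]
        congr 1; ext j; ring
      have habs : |(f N i : ℝ)| ≤ (B i : ℝ) := by
        rw [hreal]
        calc |∑ j, (V i j : ℝ) * ((⌊(2 * (N : ℝ)) * x j⌋ : ℝ) - (2 * (N : ℝ)) * x j)|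
            ≤ ∑ j, |(V i j : ℝ) * ((⌊(2 * (N : ℝ)) * x j⌋ : ℝ) - (2 * (N : ℝ)) * x j)| :=
              Finset.abs_sum_le_sum_abs _ _
          _ ≤ ∑ j, |(V i j : ℝ)| := by
              apply Finset.sum_le_sum
              intro j _
              rw [abs_mul]
              have h1 : |(⌊(2 * (N : ℝ)) * x j⌋ : ℝ) - (2 * (N : ℝ)) * x j| ≤ 1 := by
                rw [abs_sub_comm, abs_of_nonneg (sub_nonneg.2 (Int.floor_le _))]
                have := Int.sub_one_lt_floor ((2 * (N : ℝ)) * x j)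
                linarith
              calc |(V i j : ℝ)| * |(⌊(2 * (N : ℝ)) * x j⌋ : ℝ) - (2 * (N : ℝ)) * x j|
                  ≤ |(V i j : ℝ)| * 1 := by
                    exact mul_le_mul_of_nonneg_left h1 (abs_nonneg _)
                _ = |(V i j : ℝ)| := mul_one _
          _ = (B i : ℝ) := by simp [hB]
      exact_mod_cast habs
    constructor
    · intro i; simpa using neg_le_of_abs_le (key i)
    · intro i; exact le_of_abs_le (key i)
  have hfin : (Set.Icc (-B) B).Finite := Set.finite_Icc _ _
  obtain ⟨N₁, -, N₂, -, hne, hfeq⟩ :=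
    Set.infinite_univ.exists_ne_map_eq_of_mapsTo (f := f)
      (fun N _ => hbound N) hfin
  -- wlog N₁ < N₂
  wlog hlt : N₁ < N₂ generalizing N₁ N₂
  · exact this N₂ N₁ hne.symm hfeq.symm ((hne.lt_or_gt).resolve_left hlt)
  -- Step 3: the positive integer kernel vector w.
  set w : Fin m → ℕ := fun j => (⌊(2 * (N₂ : ℝ)) * x j⌋ - ⌊(2 * (N₁ : ℝ)) * x j⌋).toNat with hw
  have hfl : ∀ j, ⌊(2 * (N₁ : ℝ)) * x j⌋ + 2 ≤ ⌊(2 * (N₂ : ℝ)) * x j⌋ := by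
    intro j
    have h2 : (2 * (N₁ : ℝ)) * x j + 2 ≤ (2 * (N₂ : ℝ)) * x j := by
      have hN : (N₁ : ℝ) + 1 ≤ (N₂ : ℝ) := by exact_mod_cast hlt
      nlinarith [hx1 j]
    have h3 := Int.floor_mono h2
    rwa [show ((2:ℝ)) = ((2:ℤ):ℝ) by norm_num, Int.floor_add_intCast] at h3
  have hwpos : ∀ j, 1 ≤ w j := by
    intro j
    have := hfl j
    simp only [hw]
    omega
  have hwZ : ∀ j, (w j : ℤ) = ⌊(2 * (N₂ : ℝ)) * x j⌋ - ⌊(2 * (N₁ : ℝ)) * x j⌋ := by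
    intro j
    have := hfl j
    simp only [hw]
    omega
  have hwker : ∀ i, ∑ j, V i j * (w j : ℤ) = 0 := by
    intro i
    have := congrFun hfeq i
    simp only [hf] at this
    calc ∑ j, V i j * (w j : ℤ)
        = ∑ j, V i j * (⌊(2 * (N₂ : ℝ)) * x j⌋ - ⌊(2 * (N₁ : ℝ)) * x j⌋) := by
          congr 1; ext j; rw [hwZ j]
      _ = (∑ j, V i j * ⌊(2 * (N₂ : ℝ)) * x j⌋) - ∑ j, V i j * ⌊(2 * (N₁ : ℝ)) * x j⌋ := by
          rw [← Finset.sum_sub_distrib]; congr 1; ext j; ring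
      _ = 0 := by rw [this]; ring
  -- Step 4: infinitely many fiber elements u + k•w.
  have hm : 0 < m := lt_of_le_of_lt (Nat.zero_le n) hnm
  refine Set.infinite_of_injective_forall_mem
    (f := fun k : ℕ => fun j => u j + k * w j) ?_ ?_
  · intro k₁ k₂ hk
    have := congrFun hk ⟨0, hm⟩
    simp only [Nat.add_right_cancel_iff] at this
    exact Nat.eq_of_mul_eq_mul_right (hwpos ⟨0, hm⟩) (by omega)
  · intro k
    simp only [Set.mem_setOf_eq]
    ext i
    simp only [Matrix.mulVec, dotProduct]
    push_cast
    calc ∑ j, V i j * ((u j : ℤ) + (k : ℤ) * (w j : ℤ))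
        = (∑ j, V i j * (u j : ℤ)) + (k : ℤ) * ∑ j, V i j * (w j : ℤ) := by
          rw [Finset.mul_sum, ← Finset.sum_add_distrib]; congr 1; ext j; ring
      _ = ∑ j, V i j * (u j : ℤ) := by rw [hwker i]; ring
end

section
/- Let Q be an r×m integer matrix, with r = m − n, whose rows form a ℤ-basis of the lattice ker(V) ∩ ℤ^m (a Gale dual of V). Then W = Q^{-1}(⟨Q⟩); that is, a vector w ∈ ℝ^m lies in W if and only if Q w belongs to the convex cone in ℝ^r generated by the columns of Q. -/
open Matrix

/-- The cone `U = ker_ℝ(V) ∩ ℝᵐ_{≥0}`. -/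
def coneU {n m : ℕ} (V : Matrix (Fin n) (Fin m) ℤ) : Set (Fin m → ℝ) :=
  {u | (V.map (Int.cast : ℤ → ℝ)) *ᵥ u = 0 ∧ ∀ i, 0 ≤ u i}

/-- The Gröbner region `W`: weight vectors whose linear functional is bounded below on `U`. -/
def coneW {n m : ℕ} (V : Matrix (Fin n) (Fin m) ℤ) : Set (Fin m → ℝ) :=
  {w | ∃ c : ℝ, ∀ u ∈ coneU V, c ≤ w ⬝ᵥ u}

/-!
`W` is the dual cone of `U`, because a linear functional bounded below on a cone is nonnegative
on it. Over `ℝ` the kernel of `V` is the row space of `Q`: the rows of `Q` lie in it, they are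
independent (their Gram determinant is a nonzero integer), and there are `r = dim ker V` of them.
Hence `U = {aQ | aQ ≥ 0}`, and `w ∈ W` iff `a ⬝ (Qw) ≥ 0` whenever `aQ ≥ 0`, which by Farkas' lemma
says that `Qw` lies in the cone generated by the columns of `Q`. Farkas' lemma rests on the
closedness of finitely generated cones, which follows from the conic Carathéodory theorem.
-/

open Set Function

namespace PointedCone

variable {R E κ : Type*} [Fintype κ]

theorem mem_hull_range_iff [Semiring R] [PartialOrder R] [IsOrderedRing R] [AddCommMonoid E]
    [Module R E] {v : κ → E} {x : E} :
    x ∈ hull R (range v) ↔ ∃ c : κ → R, 0 ≤ c ∧ ∑ i, c i • v i = x := by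
  rw [Submodule.mem_span_range_iff_exists_fun]
  constructor
  · rintro ⟨c, rfl⟩
    exact ⟨fun i => c i, fun i => (c i).2, rfl⟩
  · rintro ⟨c, hc, rfl⟩
    exact ⟨fun i => ⟨c i, hc i⟩, rfl⟩

end PointedCone

section Caratheodory

variable {𝕜 E κ : Type*} [Field 𝕜] [LinearOrder 𝕜] [IsStrictOrderedRing 𝕜] [Fintype κ]

theorem exists_nonneg_sub_smul_support_ssubset {c g : κ → 𝕜} (hc : 0 ≤ c)
    (hg : support g ⊆ support c) (hpos : ∃ i, 0 < g i) :
    ∃ t : 𝕜, 0 ≤ c - t • g ∧ support (c - t • g) ⊂ support c := by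
  classical
  -- `t = min {c i / g i | 0 < g i}` is the largest step keeping `c - t • g` nonnegative.
  obtain ⟨i₀, hi₀, hmin⟩ := (Finset.univ.filter fun i => 0 < g i).exists_min_image
    (fun i => c i / g i) (by simpa [Finset.filter_nonempty_iff] using hpos)
  simp only [Finset.mem_filter, Finset.mem_univ, true_and] at hi₀ hmin
  refine ⟨c i₀ / g i₀, fun i => ?_, ?_⟩
  · rw [Pi.zero_apply, Pi.sub_apply, Pi.smul_apply, smul_eq_mul, sub_nonneg]
    rcases le_or_gt (g i) 0 with hgi | hgi
    · exact (mul_nonpos_of_nonneg_of_nonpos (div_nonneg (hc i₀) hi₀.le) hgi).trans (hc i)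
    · exact (le_div_iff₀ hgi).mp (hmin i hgi)
  · refine LE.le.ssubset_of_mem_notMem (a := i₀) ?_ (hg hi₀.ne') ?_
    · exact (support_sub _ _).trans
        (union_subset subset_rfl ((support_const_smul_subset _ _).trans hg))
    · simp [div_mul_cancel₀ _ hi₀.ne']

variable [AddCommGroup E] [Module 𝕜 E]

theorem exists_nonneg_support_ssubset_of_not_linearIndepOn {v : κ → E} {c : κ → 𝕜}
    (hc : 0 ≤ c) (hv : ¬LinearIndepOn 𝕜 v (support c)) :
    ∃ c' : κ → 𝕜, 0 ≤ c' ∧ support c' ⊂ support c ∧ ∑ i, c' i • v i = ∑ i, c i • v i := by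
  obtain ⟨l, hl, hlv, hl0⟩ := linearDepOn_iff'.mp hv
  rw [Finsupp.mem_supported, ← Finsupp.fun_support_eq] at hl
  rw [Finsupp.linearCombination_apply,
    Finsupp.sum_fintype _ _ fun i => zero_smul 𝕜 (v i)] at hlv
  obtain ⟨g, hg, hgv, hpos⟩ : ∃ g : κ → 𝕜, support g ⊆ support c ∧ ∑ i, g i • v i = 0 ∧
      ∃ i, 0 < g i := by
    by_cases hpos : ∃ i, 0 < l i
    · exact ⟨l, hl, hlv, hpos⟩
    · obtain ⟨i, hi⟩ := Finsupp.ne_iff.mp hl0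
      refine ⟨-l, by rwa [support_neg], by simp [neg_smul, hlv], i, ?_⟩
      exact neg_pos.mpr ((not_lt.mp fun h => hpos ⟨i, h⟩).lt_of_ne hi)
  obtain ⟨t, ht, hsub⟩ := exists_nonneg_sub_smul_support_ssubset hc hg hpos
  refine ⟨c - t • g, ht, hsub, ?_⟩
  simp [sub_smul, Finset.sum_sub_distrib, mul_smul, ← Finset.smul_sum, hgv]

theorem exists_nonneg_linearIndepOn_support (v : κ → E) {c : κ → 𝕜} (hc : 0 ≤ c) :
    ∃ c' : κ → 𝕜, 0 ≤ c' ∧ LinearIndepOn 𝕜 v (support c') ∧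
      ∑ i, c' i • v i = ∑ i, c i • v i := by
  induction h : (support c).ncard using Nat.strong_induction_on generalizing c with
  | _ k ih =>
    by_cases hv : LinearIndepOn 𝕜 v (support c)
    · exact ⟨c, hc, hv, rfl⟩
    obtain ⟨c', hc', hsub, hsum⟩ := exists_nonneg_support_ssubset_of_not_linearIndepOn hc hv
    obtain ⟨c'', hc'', hv'', hsum'⟩ := ih _ (h ▸ ncard_lt_ncard hsub) hc' rfl
    exact ⟨c'', hc'', hv'', hsum'.trans hsum⟩

theorem PointedCone.hull_range_eq_iUnion (v : κ → E) :
    (PointedCone.hull 𝕜 (range v) : Set E) =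
      ⋃ (s : Set κ) (_ : LinearIndepOn 𝕜 v s), PointedCone.hull 𝕜 (v '' s) := by
  refine Subset.antisymm (fun x hx => ?_)
    (iUnion₂_subset fun s _ => Submodule.span_mono (image_subset_range v s))
  obtain ⟨c, hc, rfl⟩ := PointedCone.mem_hull_range_iff.mp hx
  obtain ⟨c', hc', hv, hsum⟩ := exists_nonneg_linearIndepOn_support v hc
  refine mem_iUnion₂.mpr ⟨support c', hv, hsum ▸ Submodule.sum_mem _ fun i _ => ?_⟩
  by_cases hi : c' i = 0
  · simp [hi]
  · exact PointedCone.smul_mem _ (hc' i) (Submodule.subset_span ⟨i, hi, rfl⟩)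

end Caratheodory

section Closed

variable {E κ : Type*} [AddCommGroup E] [TopologicalSpace E] [IsTopologicalAddGroup E]
  [Module ℝ E] [ContinuousSMul ℝ E] [T2Space E]

theorem LinearIndependent.isClosed_hull_range [Fintype κ] {v : κ → E}
    (hv : LinearIndependent ℝ v) : IsClosed (PointedCone.hull ℝ (range v) : Set E) := by
  have hL : (PointedCone.hull ℝ (range v) : Set E) =
      Fintype.linearCombination ℝ v '' Ici 0 := by
    ext x
    simp [PointedCone.mem_hull_range_iff, Fintype.linearCombination_apply]
  rw [hL]
  exact (LinearMap.isClosedEmbedding_of_injective (LinearMap.ker_eq_bot.mpr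
    (linearIndependent_iff_injective_fintypeLinearCombination.mp hv))).isClosedMap _ isClosed_Ici

theorem PointedCone.isClosed_hull_range [Finite κ] (v : κ → E) :
    IsClosed (hull ℝ (range v) : Set E) := by
  have := Fintype.ofFinite κ
  rw [hull_range_eq_iUnion]
  refine isClosed_iUnion_of_finite fun s => isClosed_iUnion_of_finite fun hs => ?_
  have := Fintype.ofFinite s
  rw [image_eq_range]
  exact LinearIndependent.isClosed_hull_range hs

theorem PointedCone.exists_strongDual_of_notMem_hull_range [LocallyConvexSpace ℝ E] [Finite κ]
    {v : κ → E} {x : E} (hx : x ∉ hull ℝ (range v)) :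
    ∃ f : StrongDual ℝ E, (∀ i, 0 ≤ f (v i)) ∧ f x < 0 := by
  obtain ⟨f, hf, hfx⟩ :=
    ProperCone.hyperplane_separation_point ⟨hull ℝ (range v), isClosed_hull_range v⟩ hx
  exact ⟨f, fun i => hf _ (Submodule.subset_span ⟨i, rfl⟩), hfx⟩

end Closed

namespace Matrix

variable {ι κ : Type*} [Fintype ι] [Fintype κ]

/-- Farkas' lemma. -/
theorem exists_nonneg_mulVec_eq_iff (M : Matrix ι κ ℝ) (x : ι → ℝ) :
    (∃ c, 0 ≤ c ∧ M *ᵥ c = x) ↔ ∀ y, 0 ≤ y ᵥ* M → 0 ≤ y ⬝ᵥ x := by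
  classical
  refine ⟨fun ⟨c, hc, hcx⟩ y hy => ?_, fun h => ?_⟩
  · rw [← hcx, dotProduct_mulVec]
    exact dotProduct_nonneg_of_nonneg hy hc
  by_contra hx
  have hx' : x ∉ PointedCone.hull ℝ (range fun j => Mᵀ j) := by
    rw [PointedCone.mem_hull_range_iff]
    simpa [mulVec_eq_sum] using hx
  obtain ⟨f, hf, hfx⟩ := PointedCone.exists_strongDual_of_notMem_hull_range hx'
  have hfy : ∀ z, f z = (fun i => f (Pi.single i 1)) ⬝ᵥ z := fun z => by
    conv_lhs => rw [pi_eq_sum_univ' z]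
    simp [dotProduct, mul_comm]
  exact hfx.not_ge ((h _ fun j => (hf j).trans_eq (hfy _)).trans_eq (hfy x).symm)

variable {R : Type*} [CommRing R] [LinearOrder R] [IsStrictOrderedRing R]

theorem vecMul_mul_transpose_eq_zero_iff (A : Matrix ι κ R) (b : ι → R) :
    b ᵥ* (A * Aᵀ) = 0 ↔ b ᵥ* A = 0 := by
  refine ⟨fun h => ?_, fun h => by rw [← vecMul_vecMul, h, zero_vecMul]⟩
  rw [← dotProduct_self_eq_zero]
  calc (b ᵥ* A) ⬝ᵥ (b ᵥ* A) = (b ᵥ* A) ⬝ᵥ (Aᵀ *ᵥ b) := by rw [mulVec_transpose]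
    _ = (b ᵥ* (A * Aᵀ)) ⬝ᵥ b := by rw [dotProduct_mulVec, vecMul_vecMul]
    _ = 0 := by rw [h, zero_dotProduct]

theorem det_mul_transpose_ne_zero_iff [DecidableEq ι] (A : Matrix ι κ R) :
    (A * Aᵀ).det ≠ 0 ↔ Injective (· ᵥ* A) := by
  rw [Ne, ← exists_vecMul_eq_zero_iff, show (· ᵥ* A) = ⇑(vecMulLinear A) from rfl,
    injective_iff_map_eq_zero]
  simp [vecMul_mul_transpose_eq_zero_iff, not_imp_not]

theorem injective_vecMul_map_intCast {A : Matrix ι κ ℤ} (hA : Injective (· ᵥ* A)) :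
    Injective (· ᵥ* A.map (Int.cast : ℤ → R)) := by
  classical
  rw [← det_mul_transpose_ne_zero_iff] at hA ⊢
  have hdet := RingHom.map_det (Int.castRingHom R) (A * Aᵀ)
  rw [RingHom.mapMatrix_apply, Matrix.map_mul, transpose_map, Int.coe_castRingHom] at hdet
  simpa [← hdet] using hA

end Matrix

theorem LinearMap.range_eq_ker_of_finrank_eq_sub {K E F G : Type*} [DivisionRing K]
    [AddCommGroup E] [Module K E] [AddCommGroup F] [Module K F] [AddCommGroup G] [Module K G]
    [FiniteDimensional K E] {f : E →ₗ[K] F} {g : G →ₗ[K] E} (hf : Surjective f)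
    (hg : Injective g) (hfg : f ∘ₗ g = 0)
    (hdim : Module.finrank K G = Module.finrank K E - Module.finrank K F) :
    range g = ker f := by
  refine Submodule.eq_of_le_of_finrank_eq (range_le_ker_iff.mpr hfg) ?_
  have hrk := f.finrank_range_add_finrank_ker
  rw [range_eq_top.mpr hf, finrank_top] at hrk
  rw [finrank_range_of_inj hg, hdim]
  omega

theorem Matrix.range_vecMulLinear_map_intCast_eq_ker {K ι κ ν : Type*} [Field K] [LinearOrder K]
    [IsStrictOrderedRing K] [Fintype ι] [Fintype κ] [Fintype ν] {V : Matrix ν κ ℤ}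
    {Q : Matrix ι κ ℤ} (hV : Surjective (V.map (Int.cast : ℤ → K)).mulVecLin)
    (hQ : Injective (· ᵥ* Q)) (hVQ : V * Qᵀ = 0)
    (hdim : Fintype.card ι = Fintype.card κ - Fintype.card ν) :
    LinearMap.range (Q.map (Int.cast : ℤ → K)).vecMulLinear =
      LinearMap.ker (V.map (Int.cast : ℤ → K)).mulVecLin := by
  have hVQK : V.map (Int.cast : ℤ → K) * (Q.map (Int.cast : ℤ → K))ᵀ = 0 := by
    have hcast : V.map (Int.cast : ℤ → K) * (Q.map (Int.cast : ℤ → K))ᵀ =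
        (V * Qᵀ).map (Int.castRingHom K) := by
      rw [Matrix.map_mul, transpose_map]; rfl
    rw [hcast, hVQ, Matrix.map_zero _ (map_zero _)]
  refine LinearMap.range_eq_ker_of_finrank_eq_sub hV (injective_vecMul_map_intCast hQ) ?_
    (by simpa using hdim)
  ext a : 1
  simp [← mulVec_transpose, mulVec_mulVec, hVQK]

theorem mem_coneW_iff {n m : ℕ} {V : Matrix (Fin n) (Fin m) ℤ} {w : Fin m → ℝ} :
    w ∈ coneW V ↔ ∀ u ∈ coneU V, 0 ≤ w ⬝ᵥ u := by
  refine ⟨fun ⟨c, hc⟩ u hu => ?_, fun h => ⟨0, h⟩⟩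
  by_contra! hneg
  -- rescaling `u` makes `w ⬝ᵥ u` equal to `-(|c| + 1) < c`
  have ht : 0 ≤ (|c| + 1) / -(w ⬝ᵥ u) := div_nonneg (by positivity) (by linarith)
  have hscaled := hc (((|c| + 1) / -(w ⬝ᵥ u)) • u)
    ⟨by rw [mulVec_smul, hu.1, smul_zero], fun i => mul_nonneg ht (hu.2 i)⟩
  rw [dotProduct_smul, smul_eq_mul, div_mul_eq_mul_div, div_neg,
    mul_div_cancel_right₀ _ hneg.ne] at hscaled
  linarith [neg_abs_le c]

theorem coneW_eq_preimage_of_coneQ_general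
    (n m r : ℕ) (hr : r = m - n)
    (V : Matrix (Fin n) (Fin m) ℤ) (Q : Matrix (Fin r) (Fin m) ℤ)
    (hcomplete : ∀ b : Fin n → ℝ, ∃ u : Fin m → ℝ,
      (∀ i, 0 ≤ u i) ∧ (V.map (Int.cast : ℤ → ℝ)) *ᵥ u = b)
    (hQindep : Function.Injective fun a : Fin r → ℤ => Matrix.vecMul a Q)
    (hQspan : ∀ u : Fin m → ℤ, V *ᵥ u = 0 ↔ ∃ a : Fin r → ℤ, Matrix.vecMul a Q = u) :
    ∀ w : Fin m → ℝ, w ∈ coneW V ↔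
      ∃ c : Fin m → ℝ, (∀ j, 0 ≤ c j) ∧
        (Q.map (Int.cast : ℤ → ℝ)) *ᵥ c = (Q.map (Int.cast : ℤ → ℝ)) *ᵥ w := by
  intro w
  set Qr := Q.map (Int.cast : ℤ → ℝ)
  have hVQ : V * Qᵀ = 0 := ext_of_mulVec_single fun i => by
    rw [← mulVec_mulVec, mulVec_transpose, zero_mulVec]
    exact (hQspan _).mpr ⟨_, rfl⟩
  have hker : LinearMap.range Qr.vecMulLinear = LinearMap.ker (V.map Int.cast).mulVecLin :=
    range_vecMulLinear_map_intCast_eq_ker (fun b => (hcomplete b).imp fun _ hu => hu.2)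
      hQindep hVQ (by simp [hr])
  have hU : ∀ u, u ∈ coneU V ↔ (∃ a, a ᵥ* Qr = u) ∧ 0 ≤ u := fun u =>
    and_congr_left' (SetLike.ext_iff.mp hker u).symm
  calc w ∈ coneW V ↔ ∀ u ∈ coneU V, 0 ≤ w ⬝ᵥ u := mem_coneW_iff
    _ ↔ ∀ a, 0 ≤ a ᵥ* Qr → 0 ≤ a ⬝ᵥ (Qr *ᵥ w) := by
      simp only [hU, dotProduct_mulVec, dotProduct_comm w]
      exact ⟨fun h a ha => h _ ⟨⟨a, rfl⟩, ha⟩, fun h _ ⟨⟨a, ha⟩, hu⟩ => ha ▸ h a (ha ▸ hu)⟩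
    _ ↔ ∃ c, 0 ≤ c ∧ Qr *ᵥ c = Qr *ᵥ w := (exists_nonneg_mulVec_eq_iff Qr _).symm

/-- If `Q` is a Gale dual of `V` (its rows form a `ℤ`-basis of
`ker V ∩ ℤᵐ`), then `W = Q⁻¹(⟨Q⟩)`: a vector `w ∈ ℝᵐ` lies in `W` iff `Q w` belongs
to the convex cone in `ℝʳ` generated by the columns of `Q`. -/
theorem coneW_eq_preimage_of_coneQ
    (n m r : ℕ) (hnm : n < m) (hr : r = m - n)
    (V : Matrix (Fin n) (Fin m) ℤ) (Q : Matrix (Fin r) (Fin m) ℤ)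
    (hrank : V.rank = n)
    (hcomplete : ∀ b : Fin n → ℝ, ∃ u : Fin m → ℝ,
      (∀ i, 0 ≤ u i) ∧ (V.map (Int.cast : ℤ → ℝ)) *ᵥ u = b)
    (hQindep : Function.Injective fun a : Fin r → ℤ => Matrix.vecMul a Q)
    (hQspan : ∀ u : Fin m → ℤ, V *ᵥ u = 0 ↔ ∃ a : Fin r → ℤ, Matrix.vecMul a Q = u) :
    ∀ w : Fin m → ℝ, w ∈ coneW V ↔
      ∃ c : Fin m → ℝ, (∀ j, 0 ≤ c j) ∧
        (Q.map (Int.cast : ℤ → ℝ)) *ᵥ c = (Q.map (Int.cast : ℤ → ℝ)) *ᵥ w :=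
  coneW_eq_preimage_of_coneQ_general n m r hr V Q hcomplete hQindep hQspan
end

section
/- Let w ∈ ℝ^m be generic for the toric ideal I_V (i.e. in_w(I_V) is a monomial ideal). If in_w(I_V) is an initial ideal of I_V, that is, in_w(I_V) = in_≼(I_V) for some monomial (term) order ≼ on K[x_1,…,x_m], then w ∈ W. -/
open Matrix MvPolynomial

/-- The toric ideal of `V`: kernel of `xⱼ ↦ t^{vⱼ}` into Laurent polynomials. -/
noncomputable def toricIdeal (K : Type*) [Field K] {n m : ℕ}
    (V : Matrix (Fin n) (Fin m) ℤ) : Ideal (MvPolynomial (Fin m) K) :=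
  RingHom.ker (MvPolynomial.aeval
    (fun j => AddMonoidAlgebra.of' K (Fin n → ℤ) (fun i => V i j)) :
    MvPolynomial (Fin m) K →ₐ[K] AddMonoidAlgebra K (Fin n → ℤ))

/-- The `w`-weight of an exponent vector `a`: `wᵀ a`. -/
noncomputable def wdeg {m : ℕ} (w : Fin m → ℝ) (a : Fin m →₀ ℕ) : ℝ :=
  ∑ i, w i * (a i : ℝ)

/-- The initial form `in_w(f)`: the sum of the terms of `f` of maximal `w`-weight. -/
noncomputable def initialForm {K : Type*} [Field K] {m : ℕ} (w : Fin m → ℝ)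
    (f : MvPolynomial (Fin m) K) : MvPolynomial (Fin m) K :=
  ∑ a ∈ f.support.filter (fun a => ∀ b ∈ f.support, wdeg w b ≤ wdeg w a),
    MvPolynomial.monomial a (f.coeff a)

/-- The initial ideal `in_w(I)`: the ideal generated by the initial forms of elements of `I`. -/
noncomputable def initialIdealW {K : Type*} [Field K] {m : ℕ} (w : Fin m → ℝ)
    (I : Ideal (MvPolynomial (Fin m) K)) : Ideal (MvPolynomial (Fin m) K) :=
  Ideal.span {g | ∃ f ∈ I, g = initialForm w f}

/-- A monomial ideal: an ideal generated by monomials. -/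
def IsMonomialIdeal {K : Type*} [Field K] {m : ℕ}
    (J : Ideal (MvPolynomial (Fin m) K)) : Prop :=
  ∃ S : Set (Fin m →₀ ℕ),
    J = Ideal.span ((fun a => MvPolynomial.monomial a (1 : K)) '' S)

/-- A monomial (term) order on the exponent vectors in `ℕᵐ`: a total order,
compatible with addition, for which `0` is the smallest element. -/
structure TermOrder (m : ℕ) where
  le : (Fin m →₀ ℕ) → (Fin m →₀ ℕ) → Prop
  refl : ∀ a, le a a
  trans : ∀ a b c, le a b → le b c → le a c
  antisymm : ∀ a b, le a b → le b a → a = b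
  total : ∀ a b, le a b ∨ le b a
  zero_le : ∀ a, le 0 a
  add_right : ∀ a b c, le a b → le (a + c) (b + c)

/-- The initial ideal `in_≼(I)`: the ideal generated by the `≼`-leading monomials of
the nonzero elements of `I`. -/
noncomputable def initialIdealOrd {K : Type*} [Field K] {m : ℕ} (t : TermOrder m)
    (I : Ideal (MvPolynomial (Fin m) K)) : Ideal (MvPolynomial (Fin m) K) :=
  Ideal.span {g | ∃ f ∈ I, f ≠ 0 ∧ ∃ a ∈ f.support,
    (∀ b ∈ f.support, t.le b a) ∧ g = MvPolynomial.monomial a (1 : K)}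

/-! If `w ∉ W`, some `u ∈ U` has negative `w`-weight. Since `U` is cut out by rational equations,
its rational points are dense in it, and clearing denominators gives `a ∈ ℕᵐ` with `V a = 0` and
`w ⬝ a < 0`. The binomial `x^a - 1` lies in `I_V` and its `w`-initial form is the constant `-1`,
so `in_w(I_V)` is the unit ideal. But `in_≼(I_V)` never is: a polynomial whose `≼`-leading
monomial is `1` is a constant, and `I_V` is proper. -/

theorem LinearMap.exists_comp_comp_eq_self {K V W : Type*} [Field K] [AddCommGroup V]
    [Module K V] [AddCommGroup W] [Module K W] (f : V →ₗ[K] W) :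
    ∃ g : W →ₗ[K] V, f ∘ₗ g ∘ₗ f = f := by
  obtain ⟨r, hr⟩ := f.rangeRestrict.exists_rightInverse_of_surjective f.range_rangeRestrict
  obtain ⟨g, hg⟩ := LinearMap.exists_extend r
  refine ⟨g, LinearMap.ext fun x => ?_⟩
  have hgf : g (f x) = r ⟨f x, x, rfl⟩ := congr($hg ⟨f x, x, rfl⟩)
  simpa [hgf] using congr(($hr ⟨f x, x, rfl⟩ : W))

theorem Matrix.exists_mul_mul_eq_self {K ι κ : Type*} [Field K] [Fintype ι] [Fintype κ]
    (A : Matrix ι κ K) : ∃ B : Matrix κ ι K, A * B * A = A := by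
  classical
  obtain ⟨g, hg⟩ := (toLin' A).exists_comp_comp_eq_self
  refine ⟨LinearMap.toMatrix' g, ?_⟩
  have h := congr(LinearMap.toMatrix' $hg)
  rwa [LinearMap.toMatrix'_comp, LinearMap.toMatrix'_comp, LinearMap.toMatrix'_toLin',
    ← Matrix.mul_assoc] at h

theorem Matrix.map_ratCast_mulVec {ι κ : Type*} [Fintype κ] (M : Matrix ι κ ℚ) (v : κ → ℚ) :
    M.map (↑) *ᵥ (fun j => (v j : ℝ)) = fun i => ((M *ᵥ v) i : ℝ) :=
  funext fun i => ((Rat.castHom ℝ).map_mulVec M v i).symm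

theorem Matrix.mem_closure_ratCast_ker {ι κ : Type*} [Fintype ι] [Fintype κ] (A : Matrix ι κ ℚ)
    {u : κ → ℝ} (hu : A.map (↑) *ᵥ u = 0) :
    u ∈ closure ((fun q j => (q j : ℝ)) '' {q : κ → ℚ | A *ᵥ q = 0}) := by
  obtain ⟨B, hB⟩ := A.exists_mul_mul_eq_self
  -- `Φ` is a continuous retraction onto the kernel that maps rational points to rational points
  set Φ : (κ → ℝ) → κ → ℝ := fun x => x - B.map (↑) *ᵥ (A.map (↑) *ᵥ x)
  have hΦ : Continuous Φ := by fun_prop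
  have hΦcast (q : κ → ℚ) : Φ (fun j => (q j : ℝ)) = fun j => ((q - B *ᵥ (A *ᵥ q)) j : ℝ) := by
    ext j
    simp only [Φ, map_ratCast_mulVec, Pi.sub_apply, Rat.cast_sub]
  have hker (q : κ → ℚ) : A *ᵥ (q - B *ᵥ (A *ᵥ q)) = 0 := by
    rw [mulVec_sub, mulVec_mulVec, mulVec_mulVec, hB, sub_self]
  have hΦu : Φ u = u := by simp only [Φ, hu, mulVec_zero, sub_zero]
  rw [← hΦu]
  refine map_mem_closure hΦ (DenseRange.piMap (fun _ => Rat.denseRange_cast) u) ?_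
  rintro _ ⟨q, rfl⟩
  exact ⟨_, hker q, (hΦcast q).symm⟩

open Filter Topology in
theorem Matrix.exists_rat_nonneg_mulVec_eq_zero_dotProduct_neg {ι κ : Type*} [Fintype ι]
    [Fintype κ] (V : Matrix ι κ ℚ) {u : κ → ℝ} (hu : 0 ≤ u) (hVu : V.map (↑) *ᵥ u = 0)
    {w : κ → ℝ} (hw : w ⬝ᵥ u < 0) :
    ∃ q : κ → ℚ, V *ᵥ q = 0 ∧ 0 ≤ q ∧ w ⬝ᵥ (fun j => (q j : ℝ)) < 0 := by
  classical
  let E : Matrix {j // u j = 0} κ ℚ := Matrix.of fun i => Pi.single i.1 1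
  have hE (x : κ → ℚ) : E *ᵥ x = fun i => x i.1 := by ext i; simp [E, mulVec]
  have hEu : E.map (↑) *ᵥ u = 0 := by
    ext i
    simp [E, mulVec, dotProduct, Pi.single_apply, apply_ite, i.2]
  -- The rows of `E` pin the coordinates where `u` vanishes to zero; near `u` the others stay positive.
  have hclosure := (fromRows V E).mem_closure_ratCast_ker (u := u)
    (by rw [fromRows_map, fromRows_mulVec, hVu, hEu]; exact Sum.elim_zero_zero)
  have hnear : ∀ᶠ x in 𝓝 u, (∀ j, 0 < u j → 0 < x j) ∧ w ⬝ᵥ x < 0 :=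
    (eventually_all.2 fun j => eventually_imp_distrib_left.2 fun hj =>
      (continuous_apply j).continuousAt.eventually (lt_mem_nhds hj)).and
      ((continuous_const.dotProduct continuous_id).continuousAt.eventually (gt_mem_nhds hw))
  obtain ⟨_, ⟨q, hq, rfl⟩, hpos, hneg⟩ :=
    ((mem_closure_iff_frequently.1 hclosure).and_eventually hnear).exists
  rw [Set.mem_ofPred_eq, fromRows_mulVec, hE] at hq
  refine ⟨q, funext fun i => congr_fun hq (.inl i), fun j => ?_, hneg⟩
  rcases (hu j).eq_or_lt with hj | hj
  · exact (congr_fun hq (.inr ⟨j, hj.symm⟩)).ge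
  · exact_mod_cast (show (0 : ℝ) ≤ q j from (hpos j hj).le)

theorem exists_nat_eq_mul_of_nonneg {κ : Type*} [Fintype κ] {q : κ → ℚ} (hq : 0 ≤ q) :
    ∃ N : ℕ, 0 < N ∧ ∃ a : κ → ℕ, ∀ j, (a j : ℚ) = N * q j := by
  refine ⟨∏ j, (q j).den, Finset.prod_pos fun j _ => (q j).pos, ?_⟩
  choose t ht using fun j => Finset.dvd_prod_of_mem (fun i => (q i).den) (Finset.mem_univ j)
  refine ⟨fun j => (q j).num.toNat * t j, fun j => ?_⟩
  have hnum : ((q j).num.toNat : ℚ) = (q j).num := by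
    exact_mod_cast Int.toNat_of_nonneg (Rat.num_nonneg.2 (hq j))
  rw [ht j, Nat.cast_mul, Nat.cast_mul, hnum, ← Rat.mul_den_eq_num]
  ring

theorem Matrix.exists_nat_mulVec_eq_zero_dotProduct_neg {ι κ : Type*} [Fintype ι] [Fintype κ]
    (V : Matrix ι κ ℤ) {u : κ → ℝ} (hu : 0 ≤ u) (hVu : V.map (↑) *ᵥ u = 0) {w : κ → ℝ}
    (hw : w ⬝ᵥ u < 0) :
    ∃ a : κ → ℕ, V *ᵥ (fun j => (a j : ℤ)) = 0 ∧ w ⬝ᵥ (fun j => (a j : ℝ)) < 0 := by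
  obtain ⟨q, hVq, hq, hwq⟩ :=
    (V.map (Int.cast : ℤ → ℚ)).exists_rat_nonneg_mulVec_eq_zero_dotProduct_neg hu
      (by rwa [Matrix.map_map, show Rat.cast ∘ Int.cast = (Int.cast : ℤ → ℝ) from
        funext Rat.cast_intCast]) hw
  obtain ⟨N, hN, a, ha⟩ := exists_nat_eq_mul_of_nonneg hq
  refine ⟨a, funext fun i => ?_, ?_⟩
  · have h := (Int.castRingHom ℚ).map_mulVec V (fun j => (a j : ℤ)) i
    have haq : Int.cast ∘ (fun j => (a j : ℤ)) = (N : ℚ) • q := by ext j; simp [ha]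
    rw [Int.coe_castRingHom, haq, mulVec_smul, hVq, smul_zero] at h
    exact Int.cast_injective (α := ℚ) h
  · have haq : (fun j => (a j : ℝ)) = (N : ℝ) • fun j => (q j : ℝ) := by
      ext j
      simpa using congrArg (Rat.cast : ℚ → ℝ) (ha j)
    rw [haq, dotProduct_smul, smul_eq_mul]
    exact mul_neg_of_pos_of_neg (by exact_mod_cast hN) hwq

theorem aeval_monomial_one_toric (K : Type*) [Field K] {n m : ℕ} (V : Matrix (Fin n) (Fin m) ℤ)
    (d : Fin m →₀ ℕ) :
    aeval (fun j => AddMonoidAlgebra.of' K (Fin n → ℤ) (fun i => V i j)) (monomial d (1 : K)) =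
      AddMonoidAlgebra.single (V *ᵥ fun j => (d j : ℤ)) 1 := by
  rw [aeval_monomial, map_one, one_mul, Finsupp.prod_fintype _ _ (fun j => pow_zero _)]
  simp only [AddMonoidAlgebra.of'_apply, AddMonoidAlgebra.single_pow, one_pow,
    AddMonoidAlgebra.prod_single, Finset.prod_const_one]
  congr 1
  ext i
  simp [Matrix.mulVec, dotProduct, mul_comm]

theorem monomial_sub_monomial_mem_toricIdeal (K : Type*) [Field K] {n m : ℕ}
    (V : Matrix (Fin n) (Fin m) ℤ) {a b : Fin m →₀ ℕ}
    (h : V *ᵥ (fun j => (a j : ℤ)) = V *ᵥ (fun j => (b j : ℤ))) :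
    monomial a (1 : K) - monomial b 1 ∈ toricIdeal K V := by
  rw [toricIdeal, RingHom.mem_ker, map_sub, aeval_monomial_one_toric, aeval_monomial_one_toric,
    h, sub_self]

theorem toricIdeal_ne_top (K : Type*) [Field K] {n m : ℕ} (V : Matrix (Fin n) (Fin m) ℤ) :
    toricIdeal K V ≠ ⊤ :=
  RingHom.ker_ne_top _

theorem initialForm_eq_monomial_of_forall_wdeg_lt {K : Type*} [Field K] {m : ℕ}
    {w : Fin m → ℝ} {f : MvPolynomial (Fin m) K} {a : Fin m →₀ ℕ} (ha : a ∈ f.support)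
    (hlt : ∀ b ∈ f.support, b ≠ a → wdeg w b < wdeg w a) :
    initialForm w f = monomial a (f.coeff a) := by
  have hmax : f.support.filter (fun c => ∀ b ∈ f.support, wdeg w b ≤ wdeg w c) = {a} := by
    ext c
    simp only [Finset.mem_filter, Finset.mem_singleton]
    constructor
    · rintro ⟨hc, hcmax⟩
      by_contra hca
      exact (hlt c hc hca).not_ge (hcmax a ha)
    · rintro rfl
      exact ⟨ha, fun b hb => (eq_or_ne b c).elim (fun h => h ▸ le_rfl) fun h => (hlt b hb h).le⟩
  rw [initialForm, hmax, Finset.sum_singleton]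

theorem initialForm_monomial_sub_one {K : Type*} [Field K] {m : ℕ} {w : Fin m → ℝ}
    {a : Fin m →₀ ℕ} (ha : wdeg w a < 0) :
    initialForm w (monomial a (1 : K) - 1) = -1 := by
  have ha0 : a ≠ 0 := by rintro rfl; simp [wdeg] at ha
  have hcoeff (b : Fin m →₀ ℕ) :
      (monomial a (1 : K) - 1).coeff b = (if a = b then 1 else 0) - if 0 = b then 1 else 0 := by
    rw [coeff_sub, coeff_monomial, coeff_one]
  rw [initialForm_eq_monomial_of_forall_wdeg_lt (a := 0)]
  · simp [hcoeff, ha0]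
  · simp [hcoeff, ha0]
  · intro b hb hb0
    obtain rfl : a = b := by
      by_contra hab
      simp [hcoeff, hab, Ne.symm hb0] at hb
    simpa [wdeg] using ha

theorem initialIdealOrd_le_ker_constantCoeff {K : Type*} [Field K] {m : ℕ} (t : TermOrder m)
    {I : Ideal (MvPolynomial (Fin m) K)} (hI : I ≠ ⊤) :
    initialIdealOrd t I ≤ RingHom.ker constantCoeff := by
  rw [initialIdealOrd, Ideal.span_le]
  rintro _ ⟨f, hfI, -, a, ha, hmax, rfl⟩
  have ha0 : a ≠ 0 := by
    rintro rfl
    have hf : f = C (f.coeff 0) := by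
      ext b
      rw [coeff_C]
      split_ifs with hb
      · rw [hb]
      · exact notMem_support_iff.1 fun hb' => hb (t.antisymm _ _ (t.zero_le b) (hmax b hb'))
    refine hI (Ideal.eq_top_of_isUnit_mem _ hfI ?_)
    rw [hf]
    exact (isUnit_iff_ne_zero.2 (mem_support_iff.1 ha)).map C
  simp [constantCoeff_monomial, ha0]

theorem initialIdealOrd_ne_top {K : Type*} [Field K] {m : ℕ} (t : TermOrder m)
    {I : Ideal (MvPolynomial (Fin m) K)} (hI : I ≠ ⊤) : initialIdealOrd t I ≠ ⊤ := by
  intro h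
  have h1 := initialIdealOrd_le_ker_constantCoeff t hI
    (h ▸ Submodule.mem_top : (1 : MvPolynomial (Fin m) K) ∈ initialIdealOrd t I)
  rw [RingHom.mem_ker, map_one] at h1
  exact one_ne_zero h1

theorem initialIdealW_toricIdeal_eq_top (K : Type*) [Field K] {n m : ℕ}
    (V : Matrix (Fin n) (Fin m) ℤ) {w : Fin m → ℝ} {a : Fin m →₀ ℕ}
    (hVa : V *ᵥ (fun j => (a j : ℤ)) = 0) (ha : wdeg w a < 0) :
    initialIdealW w (toricIdeal K V) = ⊤ := by
  have hmem : monomial a (1 : K) - 1 ∈ toricIdeal K V := by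
    simpa using monomial_sub_monomial_mem_toricIdeal K V (b := 0)
      (by rw [hVa]; exact (mulVec_zero V).symm)
  refine Ideal.eq_top_of_isUnit_mem _ (Ideal.subset_span ⟨_, hmem, rfl⟩) ?_
  rw [initialForm_monomial_sub_one ha]
  exact isUnit_one.neg

theorem mem_coneW_of_initialIdeal_general
    (K : Type*) [Field K]
    (n m : ℕ) (V : Matrix (Fin n) (Fin m) ℤ)
    (w : Fin m → ℝ)
    (hinitial : ∃ t : TermOrder m,
      initialIdealW w (toricIdeal K V) = initialIdealOrd t (toricIdeal K V)) :
    w ∈ coneW V := by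
  obtain ⟨t, ht⟩ := hinitial
  by_contra hw
  simp only [coneW, Set.mem_ofPred_eq, not_exists, not_forall, not_le] at hw
  obtain ⟨u, ⟨hVu, hu⟩, hwu⟩ := hw 0
  obtain ⟨a, hVa, hwa⟩ := V.exists_nat_mulVec_eq_zero_dotProduct_neg hu hVu hwu
  refine initialIdealOrd_ne_top t (toricIdeal_ne_top K V) ?_
  rw [← ht]
  exact initialIdealW_toricIdeal_eq_top K V (a := Finsupp.equivFunOnFinite.symm a) hVa
    (by simpa [wdeg, dotProduct] using hwa)

/-- Let `w ∈ ℝᵐ` be generic for `I_V`. If `in_w(I_V)` is an initial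
ideal of `I_V` (i.e. equals `in_≼(I_V)` for some term order `≼`), then `w ∈ W`. -/
theorem mem_coneW_of_initialIdeal
    (K : Type*) [Field K] [CharZero K]
    (n m : ℕ) (hnm : n < m) (V : Matrix (Fin n) (Fin m) ℤ)
    (hrank : V.rank = n)
    (hcomplete : ∀ b : Fin n → ℝ, ∃ u : Fin m → ℝ,
      (∀ i, 0 ≤ u i) ∧ (V.map (Int.cast : ℤ → ℝ)) *ᵥ u = b)
    (w : Fin m → ℝ)
    (hgeneric : IsMonomialIdeal (initialIdealW w (toricIdeal K V)))
    (hinitial : ∃ t : TermOrder m,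
      initialIdealW w (toricIdeal K V) = initialIdealOrd t (toricIdeal K V)) :
    w ∈ coneW V :=
  mem_coneW_of_initialIdeal_general K n m V w hinitial
end

section
/- Let w ∈ W be generic for I_V. Define Min_w = {u ∈ ℕ^m : u is the unique minimizer of x ↦ wᵀx on its fiber F(u)} and its complement notMin_w = ℕ^m \ Min_w. If u is a minimal element of notMin_w with respect to the componentwise order ≤ on ℕ^m, and u_0 is the unique minimizer of x ↦ wᵀx on the fiber F(u), then the supports of u and u_0 are disjoint: {i : u_i ≠ 0} ∩ {i : (u_0)_i ≠ 0} = ∅. -/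
open Matrix MvPolynomial

/-- `Min_w`: the set of `u ∈ ℕᵐ` that are minima of their own fiber `F(u)` with
respect to the preorder `≼_w` induced by the weight vector `w`. -/
def MinSet {n m : ℕ} (V : Matrix (Fin n) (Fin m) ℤ) (w : Fin m → ℝ) :
    Set (Fin m → ℕ) :=
  {u | ∀ x : Fin m → ℕ, V *ᵥ (fun j => (x j : ℤ)) = V *ᵥ (fun j => (u j : ℤ)) →
    w ⬝ᵥ (fun i => (u i : ℝ)) ≤ w ⬝ᵥ (fun i => (x i : ℝ))}

lemma cast_update_sub {m : ℕ} {R : Type*} [Ring R] (v : Fin m → ℕ) (i : Fin m) (h : 1 ≤ v i) :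
    (fun j => ((Function.update v i (v i - 1)) j : R)) =
      (fun j => (v j : R)) - Pi.single i 1 := by
  funext j
  by_cases hji : j = i
  · subst hji
    simp [Function.update_self, Nat.cast_sub h]
  · simp [Function.update_of_ne hji, Pi.single_eq_of_ne hji]

/-- Let `w ∈ W` be generic for `I_V`. If `u` is a `≤`-minimal
element of `notMin_w = ℕᵐ \ Min_w` and `u₀` is the minimum of the fiber `F(u)` with
respect to `≼_w`, then the supports of `u` and `u₀` are disjoint. -/
theorem supports_disjoint_of_minimal_notMin
    (K : Type*) [Field K] [CharZero K]
    (n m : ℕ) (hnm : n < m) (V : Matrix (Fin n) (Fin m) ℤ)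
    (hrank : V.rank = n)
    (hcomplete : ∀ b : Fin n → ℝ, ∃ u : Fin m → ℝ,
      (∀ i, 0 ≤ u i) ∧ (V.map (Int.cast : ℤ → ℝ)) *ᵥ u = b)
    (w : Fin m → ℝ) (hw : w ∈ coneW V)
    (hgeneric : IsMonomialIdeal (initialIdealW w (toricIdeal K V)))
    (u : Fin m → ℕ) (hu : u ∉ MinSet V w)
    (humin : ∀ u' : Fin m → ℕ, u' ∉ MinSet V w → (∀ i, u' i ≤ u i) → u' = u)
    (u₀ : Fin m → ℕ)
    (hu₀fib : V *ᵥ (fun j => (u₀ j : ℤ)) = V *ᵥ (fun j => (u j : ℤ)))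
    (hu₀min : ∀ x : Fin m → ℕ,
      V *ᵥ (fun j => (x j : ℤ)) = V *ᵥ (fun j => (u j : ℤ)) →
      w ⬝ᵥ (fun i => (u₀ i : ℝ)) ≤ w ⬝ᵥ (fun i => (x i : ℝ))) :
    ∀ i, u i = 0 ∨ u₀ i = 0 := by
  intro i
  by_contra hcon
  push_neg at hcon
  obtain ⟨hui, hu0i⟩ := hcon
  have hui1 : 1 ≤ u i := Nat.one_le_iff_ne_zero.mpr hui
  have hu0i1 : 1 ≤ u₀ i := Nat.one_le_iff_ne_zero.mpr hu0i
  set u' : Fin m → ℕ := Function.update u i (u i - 1) with hu'def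
  have hu'ne : u' ≠ u := by
    intro h
    have := congrFun h i
    simp only [hu'def, Function.update_self] at this
    omega
  have hu'le : ∀ j, u' j ≤ u j := by
    intro j; by_cases hji : j = i
    · subst hji; simp only [hu'def, Function.update_self]; omega
    · simp [hu'def, Function.update_of_ne hji]
  have hu'min : u' ∈ MinSet V w := by
    by_contra h
    exact hu'ne (humin u' h hu'le)
  set u₀' : Fin m → ℕ := Function.update u₀ i (u₀ i - 1) with hu₀'def
  have hfib' : V *ᵥ (fun j => (u₀' j : ℤ)) = V *ᵥ (fun j => (u' j : ℤ)) := by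
    rw [hu₀'def, hu'def, cast_update_sub u₀ i hu0i1, cast_update_sub u i hui1,
      Matrix.mulVec_sub, Matrix.mulVec_sub, hu₀fib]
  have hle : w ⬝ᵥ (fun j => (u' j : ℝ)) ≤ w ⬝ᵥ (fun j => (u₀' j : ℝ)) := hu'min u₀' hfib'
  rw [hu₀'def, hu'def, cast_update_sub u₀ i hu0i1, cast_update_sub u i hui1,
    dotProduct_sub, dotProduct_sub] at hle
  have hle2 : w ⬝ᵥ (fun j => (u j : ℝ)) ≤ w ⬝ᵥ (fun j => (u₀ j : ℝ)) := by linarith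
  simp only [MinSet, Set.mem_setOf_eq] at hu
  push_neg at hu
  obtain ⟨x, hxfib, hxlt⟩ := hu
  have := hu₀min x hxfib
  linarith
end

section
/- Let w ∈ W be generic for I_V, and let notMin_w = {u ∈ ℕ^m : u is not the minimizer of x ↦ wᵀx on its fiber F(u)}. Then in_w(I_V) equals the monomial ideal generated by {x^u : u ∈ notMin_w}, and this also equals the ideal generated by the monomials x^u for u ranging over the ≤-minimal elements of notMin_w. -/
open Matrix MvPolynomial

/-- `Min_w` (on exponent vectors): the set of `u ∈ ℕᵐ` that are minima of their own
fiber `F(u)` with respect to the preorder `≼_w` induced by the weight vector `w`. -/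
def MinSetF {n m : ℕ} (V : Matrix (Fin n) (Fin m) ℤ) (w : Fin m → ℝ) :
    Set (Fin m →₀ ℕ) :=
  {u | ∀ x : Fin m →₀ ℕ, V *ᵥ (fun j => (x j : ℤ)) = V *ᵥ (fun j => (u j : ℤ)) →
    wdeg w u ≤ wdeg w x}

/-!
Let `I` be any ideal. The polynomials each of whose `w`-weighted homogeneous components is the
top-weight component of an element of `I` form an ideal containing every initial form, hence
containing `in_w(I)`. So if `x^a ∈ in_w(I)`, some `f ∈ I` has all its weights `≤ wᵀa` and
weight-`wᵀa` part exactly `x^a`.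

For `I = I_V`, the coefficient of `t^{Va}` in the image of such an `f` is the sum of the
coefficients of `f` over the fiber of `a`; if `a` minimized `w` on its fiber, this sum would reduce
to the coefficient `1` of `x^a`, although `f` maps to `0`. Conversely, a point `x` of the fiber
with `wᵀx < wᵀa` gives the binomial `x^a - x^x ∈ I_V` with initial form `x^a`. Thus
`x^a ∈ in_w(I_V)` iff `a ∉ Min_w`, and a monomial ideal is spanned by the monomials it contains.
The minimal elements suffice because `≤` is well founded on `ℕᵐ` and `x^{u'}` divides `x^u`
for `u' ≤ u`.
-/

lemma MvPolynomial.weightedHomogeneousComponent_monomial_mul {R σ M : Type*} [CommSemiring R]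
    [AddCommGroup M] (w : σ → M) (n : M) (v : σ →₀ ℕ) (c : R) (f : MvPolynomial σ R) :
    weightedHomogeneousComponent w n (monomial v c * f) =
      monomial v c * weightedHomogeneousComponent w (n - Finsupp.weight w v) f := by
  classical
  ext e
  simp only [coeff_weightedHomogeneousComponent, coeff_monomial_mul']
  by_cases hve : v ≤ e
  · have : Finsupp.weight w e = Finsupp.weight w (e - v) + Finsupp.weight w v := by
      rw [← map_add, tsub_add_cancel_of_le hve]
    simp only [hve, if_true, this, eq_sub_iff_add_eq, mul_ite, mul_zero]
  · simp [hve]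

lemma MvPolynomial.span_monomial_eq_span_minimal {R σ : Type*} [CommSemiring R]
    (P : (σ →₀ ℕ) → Prop) :
    Ideal.span ((fun a => monomial a (1 : R)) '' {u | P u}) =
      Ideal.span ((fun a => monomial a (1 : R)) ''
        {u | P u ∧ ∀ u', P u' → u' ≤ u → u' = u}) := by
  refine le_antisymm (Ideal.span_le.2 ?_) (Ideal.span_mono (Set.image_mono fun u hu => hu.1))
  rintro _ ⟨u, hu, rfl⟩
  induction u using WellFoundedLT.induction with
  | ind u ih =>
    by_cases hmin : ∀ u', P u' → u' ≤ u → u' = u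
    · exact Ideal.subset_span ⟨u, ⟨hu, hmin⟩, rfl⟩
    · push Not at hmin
      obtain ⟨u', hu', hle, hne⟩ := hmin
      have hfactor : monomial u (1 : R) = monomial (u - u') 1 * monomial u' 1 := by
        rw [monomial_mul, one_mul, tsub_add_cancel_of_le hle]
      change monomial u (1 : R) ∈ _
      rw [hfactor]
      exact Ideal.mul_mem_left _ _ (ih u' (lt_of_le_of_ne hle hne) hu')

lemma IsMonomialIdeal.eq_span_monomial_mem {K : Type*} [Field K] {m : ℕ}
    {J : Ideal (MvPolynomial (Fin m) K)} (hJ : IsMonomialIdeal J) :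
    J = Ideal.span ((fun a => monomial a (1 : K)) '' {a | monomial a 1 ∈ J}) := by
  obtain ⟨S, rfl⟩ := hJ
  refine le_antisymm (Ideal.span_mono (Set.image_mono fun a ha => Ideal.subset_span ?_)) ?_
  · exact ⟨a, ha, rfl⟩
  · exact Ideal.span_le.2 (by rintro _ ⟨a, ha, rfl⟩; exact ha)

section InitialComponents

variable {K : Type*} [Field K] {m : ℕ} (w : Fin m → ℝ)

lemma wdeg_eq_weight (a : Fin m →₀ ℕ) : wdeg w a = Finsupp.weight w a := by
  simp [wdeg, Finsupp.weight_apply, Finsupp.sum_fintype, mul_comm]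

lemma coeff_weightedHomogeneousComponent_wdeg (d : ℝ) (f : MvPolynomial (Fin m) K)
    (b : Fin m →₀ ℕ) :
    coeff b (weightedHomogeneousComponent w d f) = if wdeg w b = d then coeff b f else 0 := by
  classical
  rw [coeff_weightedHomogeneousComponent, wdeg_eq_weight]

lemma coeff_initialForm (f : MvPolynomial (Fin m) K) (b : Fin m →₀ ℕ) :
    coeff b (initialForm w f) =
      if b ∈ f.support ∧ ∀ c ∈ f.support, wdeg w c ≤ wdeg w b then coeff b f else 0 := by
  classical
  simp only [initialForm, coeff_sum, coeff_monomial, Finset.sum_ite_eq', Finset.mem_filter]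

lemma weightedHomogeneousComponent_initialForm (d : ℝ) (f : MvPolynomial (Fin m) K) :
    weightedHomogeneousComponent w d (initialForm w f) =
      if ∀ b ∈ f.support, wdeg w b ≤ d then weightedHomogeneousComponent w d f else 0 := by
  ext b
  rw [apply_ite (coeff b), coeff_weightedHomogeneousComponent_wdeg,
    coeff_weightedHomogeneousComponent_wdeg, coeff_initialForm, coeff_zero]
  by_cases hb : wdeg w b = d
  · subst hb
    by_cases hmem : b ∈ f.support
    · simp only [hmem, true_and, if_true]
    · simp [hmem, notMem_support_iff.mp hmem]
  · simp [hb]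

lemma initialForm_eq_monomial {f : MvPolynomial (Fin m) K} {a : Fin m →₀ ℕ}
    (ha : a ∈ f.support) (hlt : ∀ b ∈ f.support, b ≠ a → wdeg w b < wdeg w a) :
    initialForm w f = monomial a (coeff a f) := by
  ext b
  rw [coeff_initialForm, coeff_monomial]
  by_cases hba : b = a
  · subst hba
    have hmax : ∀ c ∈ f.support, wdeg w c ≤ wdeg w b := fun c hc => by
      rcases eq_or_ne c b with rfl | hcb
      exacts [le_rfl, (hlt c hc hcb).le]
    rw [if_pos ⟨ha, hmax⟩, if_pos rfl]
  · rw [if_neg (Ne.symm hba), if_neg]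
    rintro ⟨hb, hmax⟩
    exact (hmax a ha).not_gt (hlt b hb hba)

def initialComponents (I : Ideal (MvPolynomial (Fin m) K)) :
    Submodule K (MvPolynomial (Fin m) K) where
  carrier := {g | ∀ d : ℝ, ∃ f ∈ I, (∀ b ∈ f.support, wdeg w b ≤ d) ∧
    weightedHomogeneousComponent w d f = weightedHomogeneousComponent w d g}
  zero_mem' d := ⟨0, I.zero_mem, by simp, rfl⟩
  add_mem' {g g'} hg hg' d := by
    obtain ⟨f, hf, hfd, hfg⟩ := hg d
    obtain ⟨f', hf', hfd', hfg'⟩ := hg' d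
    refine ⟨f + f', I.add_mem hf hf', fun b hb => ?_, by simp only [map_add, hfg, hfg']⟩
    rcases Finset.mem_union.mp (support_add hb) with hb | hb
    exacts [hfd b hb, hfd' b hb]
  smul_mem' c g hg d := by
    obtain ⟨f, hf, hfd, hfg⟩ := hg d
    exact ⟨c • f, I.smul_of_tower_mem c hf, fun b hb => hfd b (support_smul hb),
      by simp only [map_smul, hfg]⟩

variable {w}

lemma initialForm_mem_initialComponents {I : Ideal (MvPolynomial (Fin m) K)}
    {f : MvPolynomial (Fin m) K} (hf : f ∈ I) : initialForm w f ∈ initialComponents w I := by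
  intro d
  rw [weightedHomogeneousComponent_initialForm]
  split_ifs with hfd
  exacts [⟨f, hf, hfd, rfl⟩, ⟨0, I.zero_mem, by simp, map_zero _⟩]

lemma monomial_mul_mem_initialComponents {I : Ideal (MvPolynomial (Fin m) K)}
    (v : Fin m →₀ ℕ) (c : K) {g : MvPolynomial (Fin m) K} (hg : g ∈ initialComponents w I) :
    monomial v c * g ∈ initialComponents w I := by
  intro d
  obtain ⟨f, hf, hfd, hfg⟩ := hg (d - wdeg w v)
  refine ⟨monomial v c * f, I.mul_mem_left _ hf, fun b hb => ?_, ?_⟩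
  · rw [mem_support_iff, coeff_monomial_mul'] at hb
    split_ifs at hb with hvb
    · have hsplit : wdeg w b = wdeg w (b - v) + wdeg w v := by
        simp only [wdeg_eq_weight, ← map_add, tsub_add_cancel_of_le hvb]
      have := hfd _ (mem_support_iff.2 (right_ne_zero_of_mul hb))
      linarith
    · exact absurd rfl hb
  · simp only [weightedHomogeneousComponent_monomial_mul, ← wdeg_eq_weight, hfg]

lemma mul_mem_initialComponents {I : Ideal (MvPolynomial (Fin m) K)}
    (p : MvPolynomial (Fin m) K) {g : MvPolynomial (Fin m) K}
    (hg : g ∈ initialComponents w I) : p * g ∈ initialComponents w I := by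
  induction p using MvPolynomial.induction_on' with
  | monomial v c => exact monomial_mul_mem_initialComponents v c hg
  | add p q hp hq => rw [add_mul]; exact add_mem hp hq

lemma initialIdealW_le_initialComponents (I : Ideal (MvPolynomial (Fin m) K)) :
    (initialIdealW w I : Set (MvPolynomial (Fin m) K)) ⊆ initialComponents w I := by
  intro g hg
  induction hg using Submodule.span_induction with
  | mem g hg => obtain ⟨f, hf, rfl⟩ := hg; exact initialForm_mem_initialComponents hf
  | zero => exact zero_mem _
  | add g g' _ _ hg hg' => exact add_mem hg hg'
  | smul p g _ hg => exact mul_mem_initialComponents p hg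

lemma exists_mem_weightedHomogeneousComponent_eq_monomial {I : Ideal (MvPolynomial (Fin m) K)}
    {a : Fin m →₀ ℕ} (ha : monomial a (1 : K) ∈ initialIdealW w I) :
    ∃ f ∈ I, (∀ b ∈ f.support, wdeg w b ≤ wdeg w a) ∧
      weightedHomogeneousComponent w (wdeg w a) f = monomial a 1 := by
  obtain ⟨f, hf, hfd, hfg⟩ := initialIdealW_le_initialComponents I ha (wdeg w a)
  have hhom : IsWeightedHomogeneous w (monomial a (1 : K)) (wdeg w a) :=
    isWeightedHomogeneous_monomial w a 1 (wdeg_eq_weight w a).symm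
  exact ⟨f, hf, hfd, hfg.trans hhom.weightedHomogeneousComponent_same⟩

end InitialComponents

section Toric

variable {K : Type*} [Field K] {n m : ℕ} (V : Matrix (Fin n) (Fin m) ℤ)

def vdeg (b : Fin m →₀ ℕ) : Fin n → ℤ := V *ᵥ (fun j => (b j : ℤ))

variable (K) in
noncomputable def toricMap : MvPolynomial (Fin m) K →ₐ[K] AddMonoidAlgebra K (Fin n → ℤ) :=
  aeval fun j => AddMonoidAlgebra.of' K (Fin n → ℤ) (fun i => V i j)

lemma mem_toricIdeal_iff {f : MvPolynomial (Fin m) K} :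
    f ∈ toricIdeal K V ↔ toricMap K V f = 0 :=
  RingHom.mem_ker

lemma toricMap_monomial (b : Fin m →₀ ℕ) (r : K) :
    toricMap K V (monomial b r) = AddMonoidAlgebra.single (vdeg V b) r := by
  rw [toricMap, aeval_monomial, Finsupp.prod]
  simp only [AddMonoidAlgebra.of', AddMonoidAlgebra.single_pow, one_pow,
    AddMonoidAlgebra.prod_single, Finset.prod_const_one]
  rw [AddMonoidAlgebra.coe_algebraMap, Function.comp_apply, Algebra.algebraMap_self_apply,
    AddMonoidAlgebra.single_mul_single, zero_add, mul_one]
  congr 1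
  ext i
  simp only [vdeg, mulVec, dotProduct, Finset.sum_apply, nsmul_eq_mul, mul_comm]
  exact Finset.sum_subset (Finset.subset_univ _) fun j _ hj => by
    simp [Finsupp.notMem_support_iff.mp hj]

lemma coeff_toricMap (f : MvPolynomial (Fin m) K) (g : Fin n → ℤ) :
    (toricMap K V f).coeff g =
      ∑ b ∈ f.support with vdeg V b = g, coeff b f := by
  classical
  conv_lhs => rw [as_sum f]
  rw [Finset.sum_filter, map_sum, AddMonoidAlgebra.coeff_sum, Finsupp.finsetSum_apply]
  refine Finset.sum_congr rfl fun b _ => ?_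
  rw [toricMap_monomial, AddMonoidAlgebra.coeff_single, Finsupp.single_apply]

variable {V} {w : Fin m → ℝ}

lemma monomial_mem_initialIdealW_toricIdeal {a x : Fin m →₀ ℕ} (hx : vdeg V x = vdeg V a)
    (hlt : wdeg w x < wdeg w a) :
    monomial a (1 : K) ∈ initialIdealW w (toricIdeal K V) := by
  have hxa : x ≠ a := by rintro rfl; exact hlt.false
  refine Ideal.subset_span ⟨monomial a 1 - monomial x 1, ?_, ?_⟩
  · rw [mem_toricIdeal_iff, map_sub, toricMap_monomial, toricMap_monomial, hx,
      sub_self]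
  · have hcoeff : coeff a (monomial a (1 : K) - monomial x 1) = 1 := by
      rw [coeff_sub, coeff_monomial, coeff_monomial, if_pos rfl, if_neg hxa, sub_zero]
    have ha : a ∈ (monomial a (1 : K) - monomial x 1).support := by
      rw [mem_support_iff, hcoeff]; exact one_ne_zero
    rw [initialForm_eq_monomial w ha, hcoeff]
    intro b hb hba
    rcases Finset.mem_union.mp (support_sub _ _ _ hb) with hb | hb
    · exact absurd (Finset.mem_singleton.mp (support_monomial_subset hb)) hba
    · rwa [Finset.mem_singleton.mp (support_monomial_subset hb)]

lemma notMem_minSetF_of_mem_toricIdeal {f : MvPolynomial (Fin m) K} {a : Fin m →₀ ℕ}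
    (hf : f ∈ toricIdeal K V) (hfd : ∀ b ∈ f.support, wdeg w b ≤ wdeg w a)
    (hfa : weightedHomogeneousComponent w (wdeg w a) f = monomial a 1) :
    a ∉ MinSetF V w := by
  intro hmin
  have hcoeff (b : Fin m →₀ ℕ) (hb : wdeg w b = wdeg w a) :
      coeff b f = if a = b then 1 else 0 := by
    rw [← coeff_monomial, ← hfa, coeff_weightedHomogeneousComponent_wdeg, if_pos hb]
  have hone : (toricMap K V f).coeff (vdeg V a) = 1 := by
    rw [coeff_toricMap, Finset.sum_eq_single a]
    · rw [hcoeff a rfl, if_pos rfl]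
    · intro b hb hba
      rw [Finset.mem_filter] at hb
      rw [hcoeff b (le_antisymm (hfd b hb.1) (hmin b hb.2)), if_neg (Ne.symm hba)]
    · intro ha
      simpa using ha
  rw [(mem_toricIdeal_iff V).mp hf] at hone
  exact zero_ne_one hone

lemma monomial_mem_initialIdealW_toricIdeal_iff (a : Fin m →₀ ℕ) :
    monomial a (1 : K) ∈ initialIdealW w (toricIdeal K V) ↔ a ∉ MinSetF V w := by
  constructor
  · intro ha
    obtain ⟨f, hf, hfd, hfa⟩ := exists_mem_weightedHomogeneousComponent_eq_monomial ha
    exact notMem_minSetF_of_mem_toricIdeal hf hfd hfa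
  · intro ha
    simp only [MinSetF, Set.mem_ofPred_eq, not_forall, not_le] at ha
    obtain ⟨x, hx, hlt⟩ := ha
    exact monomial_mem_initialIdealW_toricIdeal hx hlt

end Toric

theorem initialIdeal_eq_span_notMin_general
    (K : Type*) [Field K]
    (n m : ℕ) (V : Matrix (Fin n) (Fin m) ℤ)
    (w : Fin m → ℝ)
    (hgeneric : IsMonomialIdeal (initialIdealW w (toricIdeal K V))) :
    initialIdealW w (toricIdeal K V) =
      Ideal.span ((fun a => MvPolynomial.monomial a (1 : K)) ''
        {u : Fin m →₀ ℕ | u ∉ MinSetF V w}) ∧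
    initialIdealW w (toricIdeal K V) =
      Ideal.span ((fun a => MvPolynomial.monomial a (1 : K)) ''
        {u : Fin m →₀ ℕ | u ∉ MinSetF V w ∧
          ∀ u' : Fin m →₀ ℕ, u' ∉ MinSetF V w → u' ≤ u → u' = u}) := by
  have hspan : initialIdealW w (toricIdeal K V) =
      Ideal.span ((fun a => monomial a (1 : K)) '' {u | u ∉ MinSetF V w}) := by
    rw [hgeneric.eq_span_monomial_mem]
    simp_rw [monomial_mem_initialIdealW_toricIdeal_iff]
  exact ⟨hspan, hspan.trans (span_monomial_eq_span_minimal _)⟩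

/-- Let `w ∈ W` be generic for `I_V` and let
`notMin_w = ℕᵐ \ Min_w`. Then `in_w(I_V)` is the monomial ideal generated by the
monomials `x^u` with `u ∈ notMin_w`, which also equals the ideal generated by the
monomials `x^u` for `u` ranging over the `≤`-minimal elements of `notMin_w`. -/
theorem initialIdeal_eq_span_notMin
    (K : Type*) [Field K] [CharZero K]
    (n m : ℕ) (hnm : n < m) (V : Matrix (Fin n) (Fin m) ℤ)
    (hrank : V.rank = n)
    (hcomplete : ∀ b : Fin n → ℝ, ∃ u : Fin m → ℝ,
      (∀ i, 0 ≤ u i) ∧ (V.map (Int.cast : ℤ → ℝ)) *ᵥ u = b)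
    (w : Fin m → ℝ) (hw : w ∈ coneW V)
    (hgeneric : IsMonomialIdeal (initialIdealW w (toricIdeal K V))) :
    initialIdealW w (toricIdeal K V) =
      Ideal.span ((fun a => MvPolynomial.monomial a (1 : K)) ''
        {u : Fin m →₀ ℕ | u ∉ MinSetF V w}) ∧
    initialIdealW w (toricIdeal K V) =
      Ideal.span ((fun a => MvPolynomial.monomial a (1 : K)) ''
        {u : Fin m →₀ ℕ | u ∉ MinSetF V w ∧
          ∀ u' : Fin m →₀ ℕ, u' ∉ MinSetF V w → u' ≤ u → u' = u}) :=
  initialIdeal_eq_span_notMin_general K n m V w hgeneric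
end
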